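/- arXiv:0707.1739 — 2 statements merged into one kernel-verified Lean document; each statement's English description precedes it below -/
import Mathlib

section
/- Stieltjes inversion: if μ is a probability measure on ℝ with Cauchy transform G, then the measures with density x ↦ −(1/π) Im G(x + iε) with respect to Lebesgue measure converge weakly to μ as ε ↘ 0. -/
/-!
Since `Im (x + iε - t)⁻¹ = -ε / ((x - t)² + ε²)`, the density `-(1/π) Im G(x + iε)` is the
average over `t ∼ μ` of the Cauchy density with location `t` and scale `ε`. By Fubini, integrating
a bounded continuous `f` against it gives `∫ P_ε f dμ`, where `P_ε f (t) = ∫ f (t + ε u) c(u) du`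
is the Poisson integral of `f` (`c` the standard Cauchy density). Dominated convergence gives
`P_ε f → f` pointwise with `|P_ε f| ≤ ‖f‖`, and a second dominated convergence on `μ` concludes.
-/

open MeasureTheory Filter Topology ProbabilityTheory
open scoped Real NNReal BoundedContinuousFunction

lemma im_inv_add_mul_I_sub (x t : ℝ) (γ : ℝ≥0) :
    (((x : ℂ) + (γ : ℝ) * Complex.I - t)⁻¹).im = -π * cauchyPDFReal t γ x := by
  rw [Complex.inv_im, cauchyPDFReal_def]
  simp [Complex.normSq_apply]
  field_simp

lemma integrable_inv_add_mul_I_sub (μ : Measure ℝ) [IsFiniteMeasure μ] (x : ℝ) {ε : ℝ}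
    (hε : 0 < ε) : Integrable (fun t : ℝ => ((x : ℂ) + ε * Complex.I - t)⁻¹) μ := by
  have hne : ∀ t : ℝ, (x : ℂ) + ε * Complex.I - t ≠ 0 := fun t h => by
    simpa [hε.ne'] using congrArg Complex.im h
  refine (integrable_const ε⁻¹).mono'
    ((continuous_const.sub Complex.continuous_ofReal).inv₀ hne).aestronglyMeasurable
    (ae_of_all _ fun t => ?_)
  rw [norm_inv]
  refine inv_anti₀ hε ?_
  simpa [abs_of_pos hε] using Complex.abs_im_le_norm ((x : ℂ) + ε * Complex.I - t)

lemma neg_one_div_pi_mul_im_integral_inv_sub (μ : Measure ℝ) [IsFiniteMeasure μ] (x : ℝ)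
    {γ : ℝ≥0} (hγ : γ ≠ 0) :
    -(1 / π) * (∫ t : ℝ, ((x : ℂ) + (γ : ℝ) * Complex.I - t)⁻¹ ∂μ).im
      = ∫ t, cauchyPDFReal t γ x ∂μ := by
  rw [← RCLike.im_eq_complex_im, ← integral_im
    (integrable_inv_add_mul_I_sub μ x (NNReal.coe_pos.2 (pos_iff_ne_zero.2 hγ))),
    ← integral_const_mul]
  simp only [RCLike.im_eq_complex_im, im_inv_add_mul_I_sub]
  field_simp

lemma integrable_cauchyPDFReal_prod (μ : Measure ℝ) [IsFiniteMeasure μ] (γ : ℝ≥0) :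
    Integrable (fun p : ℝ × ℝ => cauchyPDFReal p.2 γ p.1) (volume.prod μ) := by
  have hmeas : Measurable fun p : ℝ × ℝ => cauchyPDFReal p.2 γ p.1 := by
    simp only [cauchyPDFReal_def]
    fun_prop
  refine (integrable_prod_iff' hmeas.aestronglyMeasurable).2
    ⟨ae_of_all _ fun t => integrable_cauchyPDFReal t, ?_⟩
  have htranslate : ∀ t, ∫ x, ‖cauchyPDFReal t γ x‖ = ∫ x, ‖cauchyPDFReal 0 γ x‖ := fun t => by
    simpa [cauchyPDFReal_def] using integral_sub_right_eq_self (fun x => ‖cauchyPDFReal 0 γ x‖) t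
  simp only [htranslate]
  exact integrable_const _

lemma cauchyPDFReal_eq_inv_mul (t x : ℝ) {γ : ℝ≥0} (hγ : γ ≠ 0) :
    cauchyPDFReal t γ x = (γ : ℝ)⁻¹ * cauchyPDFReal 0 1 ((γ : ℝ)⁻¹ * (x - t)) := by
  simp only [cauchyPDFReal_def, NNReal.coe_one, sub_zero]
  field_simp

lemma norm_mul_cauchyPDFReal_le (f : ℝ →ᵇ ℝ) (x x₀ : ℝ) (γ : ℝ≥0) (u : ℝ) :
    ‖f x * cauchyPDFReal x₀ γ u‖ ≤ ‖f‖ * cauchyPDFReal x₀ γ u := by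
  have hnonneg : 0 ≤ cauchyPDFReal x₀ γ u := by
    rw [cauchyPDFReal_def]
    positivity
  rw [norm_mul, Real.norm_of_nonneg hnonneg]
  exact mul_le_mul_of_nonneg_right (f.norm_coe_le_norm x) hnonneg

/-- The Poisson integral of `f` at `t + iε`, after the substitution `x = t + εu`. -/
noncomputable def poissonIntegral (f : ℝ → ℝ) (ε t : ℝ) : ℝ :=
  ∫ u, f (t + ε * u) * cauchyPDFReal 0 1 u

lemma integral_mul_cauchyPDFReal (f : ℝ → ℝ) (t : ℝ) {γ : ℝ≥0} (hγ : γ ≠ 0) :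
    ∫ x, f x * cauchyPDFReal t γ x = poissonIntegral f γ t := by
  have hγ' : (γ : ℝ) ≠ 0 := by exact_mod_cast hγ
  set g : ℝ → ℝ := fun u => f (t + γ * u) * cauchyPDFReal 0 1 u
  have hscale : ∀ x, f x * cauchyPDFReal t γ x = (γ : ℝ)⁻¹ * g ((γ : ℝ)⁻¹ * (x - t)) := by
    intro x
    rw [cauchyPDFReal_eq_inv_mul t x hγ, mul_left_comm]
    simp only [g, mul_inv_cancel_left₀ hγ', add_sub_cancel]
  simp_rw [hscale, integral_const_mul, integral_sub_right_eq_self (fun x => g ((γ : ℝ)⁻¹ * x)),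
    Measure.integral_comp_inv_mul_left g, NNReal.abs_eq, smul_eq_mul, inv_mul_cancel_left₀ hγ']
  rfl

lemma integral_mul_integral_cauchyPDFReal (μ : Measure ℝ) [IsFiniteMeasure μ] (f : ℝ →ᵇ ℝ)
    {γ : ℝ≥0} (hγ : γ ≠ 0) :
    ∫ x, f x * ∫ t, cauchyPDFReal t γ x ∂μ = ∫ t, poissonIntegral f γ t ∂μ := by
  have hint : Integrable (Function.uncurry fun x t => f x * cauchyPDFReal t γ x)
      (volume.prod μ) :=
    (integrable_cauchyPDFReal_prod μ γ).bdd_mul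
      (f.continuous.comp continuous_fst).aestronglyMeasurable
      (ae_of_all _ fun p => f.norm_coe_le_norm p.1)
  simp_rw [← integral_const_mul]
  rw [integral_integral_swap hint]
  simp_rw [integral_mul_cauchyPDFReal _ _ hγ]

lemma norm_poissonIntegral_le (f : ℝ →ᵇ ℝ) (ε t : ℝ) : ‖poissonIntegral f ε t‖ ≤ ‖f‖ :=
  calc ‖poissonIntegral f ε t‖ ≤ ∫ u, ‖f‖ * cauchyPDFReal 0 1 u :=
        norm_integral_le_of_norm_le ((integrable_cauchyPDFReal 0).const_mul _)
          (ae_of_all _ fun u => norm_mul_cauchyPDFReal_le f _ 0 1 u)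
    _ = ‖f‖ := by rw [integral_const_mul, integral_cauchyPDFReal_eq_one 0 one_ne_zero, mul_one]

lemma tendsto_poissonIntegral (f : ℝ →ᵇ ℝ) (t : ℝ) :
    Tendsto (fun ε => poissonIntegral f ε t) (𝓝 0) (𝓝 (f t)) := by
  have hlim : f t = ∫ u, f (t + 0 * u) * cauchyPDFReal 0 1 u := by
    simp [integral_const_mul, integral_cauchyPDFReal_eq_one 0 one_ne_zero]
  rw [hlim]
  refine tendsto_integral_filter_of_dominated_convergence (fun u => ‖f‖ * cauchyPDFReal 0 1 u)
    (Eventually.of_forall fun ε => ?_)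
    (Eventually.of_forall fun ε => ae_of_all _ fun u => norm_mul_cauchyPDFReal_le f _ 0 1 u)
    ((integrable_cauchyPDFReal 0).const_mul _) (ae_of_all _ fun u => ?_)
  · exact (f.continuous.comp (by fun_prop)).aestronglyMeasurable.mul
      (measurable_cauchyPDFReal 0 1).aestronglyMeasurable
  · exact ((f.continuous.comp (by fun_prop)).mul continuous_const).tendsto 0

lemma tendsto_integral_poissonIntegral (μ : Measure ℝ) [IsFiniteMeasure μ] (f : ℝ →ᵇ ℝ) :
    Tendsto (fun ε => ∫ t, poissonIntegral f ε t ∂μ) (𝓝 0) (𝓝 (∫ t, f t ∂μ)) := by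
  refine tendsto_integral_filter_of_dominated_convergence (fun _ => ‖f‖)
    (Eventually.of_forall fun ε => ?_)
    (Eventually.of_forall fun ε => ae_of_all _ fun t => norm_poissonIntegral_le f ε t)
    (integrable_const _) (ae_of_all _ fun t => tendsto_poissonIntegral f t)
  have hmeas : Measurable fun p : ℝ × ℝ => f (p.1 + ε * p.2) * cauchyPDFReal 0 1 p.2 :=
    (f.continuous.measurable.comp (by fun_prop)).mul
      ((measurable_cauchyPDFReal 0 1).comp measurable_snd)
  exact hmeas.stronglyMeasurable.integral_prod_right'.aestronglyMeasurable

theorem stieltjes_inversion (μ : Measure ℝ) [IsProbabilityMeasure μ] :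
    ∀ f : BoundedContinuousFunction ℝ ℝ,
      Tendsto
        (fun ε : ℝ =>
          ∫ x : ℝ,
            f x * (-(1 / Real.pi) *
              (∫ t : ℝ, (((x : ℂ) + ε * Complex.I) - (t : ℂ))⁻¹ ∂μ).im))
        (nhdsWithin 0 (Set.Ioi 0))
        (nhds (∫ x, f x ∂μ)) := by
  intro f
  have hsmooth : ∀ ε > (0 : ℝ), ∫ x : ℝ, f x * (-(1 / Real.pi) *
      (∫ t : ℝ, (((x : ℂ) + ε * Complex.I) - (t : ℂ))⁻¹ ∂μ).im)
        = ∫ t, poissonIntegral f ε t ∂μ := by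
    intro ε hε
    lift ε to ℝ≥0 using hε.le
    have hε' : ε ≠ 0 := by exact_mod_cast hε.ne'
    simp_rw [neg_one_div_pi_mul_im_integral_inv_sub μ _ hε']
    exact integral_mul_integral_cauchyPDFReal μ f hε'
  exact ((tendsto_integral_poissonIntegral μ f).mono_left nhdsWithin_le_nhds).congr'
    (eventually_nhdsWithin_of_forall fun ε hε => (hsmooth ε hε).symm)
end

section
/- Let d ≥ 1 and η : M_d(ℂ) → M_d(ℂ) be a completely positive linear map. For fixed z ∈ ℂ⁺, define F(G) = (z·I − η(G))⁻¹ on the domain of matrices G with negative definite imaginary part. Then F maps this domain into itself: if Im G = (G − G*)/(2i) is negative definite, then z·I − η(G) is invertible and Im F(G) is negative definite. -/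
/-!
A positive map on matrices is `*`-preserving, because every matrix is a combination `∑ iᵏ Pₖ`
of four positive semidefinite matrices. Hence `Im (z - η G) = Im z + η (-Im G)` is positive
definite, which forces `A = z - η G` to be invertible, and `-Im A⁻¹ = A⁻¹ (Im A) (A⁻¹)*` is a
congruence of a positive definite matrix.
-/

open Matrix ComplexOrder

/-- Imaginary part of a complex matrix: `(G - G*)/(2i)`. -/
noncomputable def imPart {d : ℕ} (G : Matrix (Fin d) (Fin d) ℂ) :
    Matrix (Fin d) (Fin d) ℂ :=
  (2 * Complex.I)⁻¹ • (G - Gᴴ)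

section
open scoped MatrixOrder Matrix.Norms.L2Operator

theorem map_conjTranspose_of_posSemidef {n m : Type*} [Fintype n] [DecidableEq n] [Fintype m]
    (η : Matrix n n ℂ →ₗ[ℂ] Matrix m m ℂ)
    (hpos : ∀ M : Matrix n n ℂ, M.PosSemidef → (η M).PosSemidef) (M : Matrix n n ℂ) :
    η Mᴴ = (η M)ᴴ := by
  obtain ⟨x, hx, -, rfl⟩ := CStarAlgebra.exists_sum_four_nonneg M
  have hherm (i) : (x i)ᴴ = x i := (nonneg_iff_posSemidef.mp (hx i)).isHermitian
  have hherm_map (i) : (η (x i))ᴴ = η (x i) :=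
    (hpos _ (nonneg_iff_posSemidef.mp (hx i))).isHermitian
  simp [conjTranspose_sum, map_sum, hherm, hherm_map]

end

section
variable {d : ℕ}

theorem imPart_sub (A B : Matrix (Fin d) (Fin d) ℂ) : imPart (A - B) = imPart A - imPart B := by
  simp only [imPart, conjTranspose_sub]
  module

theorem imPart_smul_one (z : ℂ) :
    imPart (z • 1 : Matrix (Fin d) (Fin d) ℂ) = (z.im : ℂ) • 1 := by
  rw [imPart, conjTranspose_smul, conjTranspose_one, ← sub_smul, smul_smul, Complex.star_def,
    Complex.im_eq_sub_conj, div_eq_inv_mul]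

theorem imPart_map_of_conjTranspose
    (η : Matrix (Fin d) (Fin d) ℂ →ₗ[ℂ] Matrix (Fin d) (Fin d) ℂ) (hη : ∀ M, η Mᴴ = (η M)ᴴ)
    (M : Matrix (Fin d) (Fin d) ℂ) : imPart (η M) = η (imPart M) := by
  rw [imPart, imPart, map_smul, map_sub, hη]

theorem isUnit_of_posDef_imPart {A : Matrix (Fin d) (Fin d) ℂ} (h : (imPart A).PosDef) :
    IsUnit A := by
  rw [isUnit_iff_isUnit_det, isUnit_iff_ne_zero]
  intro hdet
  obtain ⟨v, hv, hAv⟩ := exists_mulVec_eq_zero_iff.mpr hdet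
  -- the quadratic form of `imPart A` vanishes on the kernel of `A`
  have hpos := h.dotProduct_mulVec_pos hv
  have hAv_star : star v ⬝ᵥ Aᴴ *ᵥ v = 0 := by
    rw [dotProduct_mulVec, ← star_mulVec, hAv, star_zero, zero_dotProduct]
  rw [imPart, smul_mulVec, sub_mulVec, hAv, zero_sub, dotProduct_smul, dotProduct_neg,
    hAv_star] at hpos
  simp at hpos

theorem neg_imPart_nonsing_inv {A : Matrix (Fin d) (Fin d) ℂ} (hA : IsUnit A) :
    -imPart A⁻¹ = A⁻¹ * imPart A * star A⁻¹ := by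
  have hdet := (isUnit_iff_isUnit_det A).mp hA
  rw [imPart, imPart, star_eq_conjTranspose, conjTranspose_nonsing_inv, Matrix.mul_smul,
    Matrix.smul_mul, Matrix.mul_sub, Matrix.sub_mul, nonsing_inv_mul A hdet, one_mul, mul_assoc,
    mul_nonsing_inv Aᴴ (by rwa [det_conjTranspose, isUnit_star]), mul_one, ← smul_neg, neg_sub]

theorem posDef_neg_imPart_nonsing_inv {A : Matrix (Fin d) (Fin d) ℂ} (h : (imPart A).PosDef) :
    (-imPart A⁻¹).PosDef := by
  have hA := isUnit_of_posDef_imPart h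
  rw [neg_imPart_nonsing_inv hA]
  exact (Matrix.IsUnit.posDef_star_right_conjugate_iff (isUnit_nonsing_inv_iff.mpr hA)).mpr h

end

theorem semicircular_iteration_preserves_domain (d : ℕ)
    (η : Matrix (Fin d) (Fin d) ℂ →ₗ[ℂ] Matrix (Fin d) (Fin d) ℂ)
    (hpos : ∀ M : Matrix (Fin d) (Fin d) ℂ, M.PosSemidef → (η M).PosSemidef)
    (z : ℂ) (hz : 0 < z.im)
    (G : Matrix (Fin d) (Fin d) ℂ) (hG : (-(imPart G)).PosDef) :
    IsUnit (z • (1 : Matrix (Fin d) (Fin d) ℂ) - η G) ∧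
      (-(imPart ((z • (1 : Matrix (Fin d) (Fin d) ℂ) - η G)⁻¹))).PosDef := by
  have himPart : imPart (z • 1 - η G) = (z.im : ℂ) • 1 + η (-imPart G) := by
    rw [imPart_sub, imPart_smul_one,
      imPart_map_of_conjTranspose η (map_conjTranspose_of_posSemidef η hpos), map_neg,
      sub_eq_add_neg]
  have hz_one : ((z.im : ℂ) • 1 : Matrix (Fin d) (Fin d) ℂ).PosDef :=
    PosDef.one.smul (by exact_mod_cast hz)
  have himPart_posDef : (imPart (z • 1 - η G)).PosDef :=
    himPart ▸ hz_one.add_posSemidef (hpos _ hG.posSemidef)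
  exact ⟨isUnit_of_posDef_imPart himPart_posDef, posDef_neg_imPart_nonsing_inv himPart_posDef⟩
end
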